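/- arXiv:2412.05651 — 3 statements merged into one kernel-verified Lean document; each statement's English description precedes it below -/
import Mathlib

section
/- Let S be an N×N real symmetric matrix, and for each k = 1,…,K let G_{k−1} be an N×N real positive semidefinite matrix whose diagonal entries [G_{k−1}]_{ii} are all strictly positive, and let σ_{k−1} > 0 be reals. For diagonal matrices D_{k−1} = diag(α_{1,k−1},…,α_{N,k−1}), define the total mitigation J(Θ) = Σ_{k=1}^{K} (σ_{k−1}²/N)·( tr(G_{k−1} D_{k−1}²) − 2 tr(G_{k−1} S D_{k−1}) ), where Θ = (α_{i,k−1}). Then J is minimized over all choices of Θ ∈ ℝ^{N×K} exactly when α_{i,k−1} = [G_{k−1} S]_{ii} / [G_{k−1}]_{ii} for all i, k, and the minimum value equals −I(Θ*) where I(Θ*) = Σ_{k=1}^{K} (σ_{k−1}²/N) Σ_{i=1}^{N} [G_{k−1} S]_{ii}² / [G_{k−1}]_{ii}. -/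
open Matrix

lemma trace_mul_diag {N : ℕ} (A : Matrix (Fin N) (Fin N) ℝ) (d : Fin N → ℝ) :
    (A * Matrix.diagonal d).trace = ∑ i, A i i * d i := by
  simp [Matrix.trace, Matrix.diag, Matrix.mul_apply, Matrix.diagonal]

/-- Theorem 1, deterministic FIR: closed-form error weights.
The total mitigation `J(Θ) = Σ_k (σ_{k−1}²/N)( tr(G_{k−1} D_{k−1}²) − 2 tr(G_{k−1} S D_{k−1}) )`
over diagonal matrices `D_{k−1} = diag(Θ k)` is minimized exactly at
`α_{i,k−1} = [G_{k−1} S]_{ii} / [G_{k−1}]_{ii}`, with minimum value `−I(Θ*)`. -/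
theorem stmt1 {N K : ℕ} (hN : 0 < N) (hK : 0 < K)
    (S : Matrix (Fin N) (Fin N) ℝ) (hS : S.IsSymm)
    (G : Fin K → Matrix (Fin N) (Fin N) ℝ)
    (hG : ∀ k, (G k).PosSemidef) (hGd : ∀ k i, 0 < G k i i)
    (σ : Fin K → ℝ) (hσ : ∀ k, 0 < σ k)
    (J : (Fin K → Fin N → ℝ) → ℝ)
    (hJ : ∀ Θ : Fin K → Fin N → ℝ, J Θ = ∑ k, ((σ k) ^ 2 / N) *
      ((G k * (Matrix.diagonal (Θ k)) ^ 2).trace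
        - 2 * (G k * S * Matrix.diagonal (Θ k)).trace))
    (Θstar : Fin K → Fin N → ℝ)
    (hΘstar : ∀ k i, Θstar k i = (G k * S) i i / G k i i) :
    (∀ Θ : Fin K → Fin N → ℝ, Θ ≠ Θstar → J Θstar < J Θ) ∧
      J Θstar = -(∑ k, ((σ k) ^ 2 / N) * ∑ i, ((G k * S) i i) ^ 2 / G k i i) := by
  set C : ℝ := ∑ k, ((σ k) ^ 2 / N) * ∑ i, ((G k * S) i i) ^ 2 / G k i i with hC
  have hN' : (0:ℝ) < N := by exact_mod_cast hN
  have hJ' : ∀ Θ : Fin K → Fin N → ℝ,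
      J Θ = (∑ k, ((σ k) ^ 2 / N) * ∑ i, G k i i * (Θ k i - Θstar k i) ^ 2) - C := by
    intro Θ
    rw [hJ, hC, ← Finset.sum_sub_distrib]
    refine Finset.sum_congr rfl fun k _ => ?_
    rw [← mul_sub, ← Finset.sum_sub_distrib]
    congr 1
    have hdiag : (Matrix.diagonal (Θ k)) ^ 2 = Matrix.diagonal (fun i => Θ k i * Θ k i) := by
      rw [pow_two, Matrix.diagonal_mul_diagonal]
    rw [hdiag, trace_mul_diag, trace_mul_diag, Finset.mul_sum, ← Finset.sum_sub_distrib]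
    refine Finset.sum_congr rfl fun i _ => ?_
    have hg := (hGd k i).ne'
    rw [hΘstar]
    field_simp
    ring
  have hmin : J Θstar = -C := by
    rw [hJ' Θstar]
    simp
  refine ⟨fun Θ hne => ?_, hmin⟩
  rw [hmin, hJ' Θ]
  have hpos : 0 < ∑ k, ((σ k) ^ 2 / N) * ∑ i, G k i i * (Θ k i - Θstar k i) ^ 2 := by
    obtain ⟨k, hk⟩ := Function.ne_iff.mp hne
    obtain ⟨i, hi⟩ := Function.ne_iff.mp hk
    have hnn : ∀ k : Fin K, 0 ≤ ((σ k) ^ 2 / N) * ∑ i, G k i i * (Θ k i - Θstar k i) ^ 2 := by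
      intro k
      apply mul_nonneg (div_pos (pow_pos (hσ k) 2) hN').le
      exact Finset.sum_nonneg fun i _ => mul_nonneg (hGd k i).le (sq_nonneg _)
    refine Finset.sum_pos' (fun k _ => hnn k) ⟨k, Finset.mem_univ k, ?_⟩
    apply mul_pos (div_pos (pow_pos (hσ k) 2) hN')
    refine Finset.sum_pos' (fun j _ => mul_nonneg (hGd k j).le (sq_nonneg _))
      ⟨i, Finset.mem_univ i, mul_pos (hGd k i) (pow_pos (abs_pos.mpr (sub_ne_zero.mpr hi)) 2 |>.trans_eq (by rw [sq_abs]))⟩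
  linarith
end

section
/- Let S be an N×N real symmetric matrix, D an N×N real diagonal matrix, and ψ ∈ ℝ with |ψ|·‖S‖₂ < 1. Let n_0, n_1, … be random vectors in ℝ^N with E[n_τ] = 0, E[n_τ n_τᵀ] = σ² I for all τ, and E[n_τ n_{τ'}ᵀ] = 0 for τ ≠ τ'; define w̃_0 = 0 and w̃_t = ψ S w̃_{t−1} + (ψS − D) n_{t−1} for t ≥ 1. Let W₀ = Σ_{t=0}^{∞} ψ^{2t} S^{2t}. Then the asymptotic average noise power per node ζ = lim_{t→∞} (1/N)·tr(E[w̃_t w̃_tᵀ]) exists and equals (σ²/N)·tr( (ψS − D)ᵀ W₀ (ψS − D) ) = (σ²/N)·( ψ² tr(W₀ S²) + tr(W₀ D²) − 2ψ tr(W₀ S D) ). -/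
/-!
Unrolling the recursion gives `w̃_t = ∑_{k<t} (ψS)^(t-1-k) B n_k` with `B = ψS - D`. Since the
noise is white, only the diagonal terms survive in the second moment, so
`E[w̃_t w̃_tᵀ] = σ² ∑_{k<t} C_k C_kᵀ` with `C_k = (ψS)^(t-1-k) B`, and, `ψS` being symmetric,
`tr(C_k C_kᵀ) = tr(Bᵀ (ψS)^(2(t-1-k)) B)`. As `‖(ψS)²‖₂ ≤ (|ψ| ‖S‖₂)² < 1`, the series
`W₀ = ∑ (ψS)^(2t)` converges and the partial sums tend to `σ² tr(Bᵀ W₀ B)`. The second form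
follows by expanding the product, using that `W₀` commutes with `S` and that `D` is symmetric.
-/

open MeasureTheory Matrix Filter

/-- Spectral norm (largest singular value) of a real square matrix. -/
noncomputable def specNorm {N : ℕ} (X : Matrix (Fin N) (Fin N) ℝ) : ℝ :=
  ‖Matrix.toEuclideanCLM (𝕜 := ℝ) X‖

/-- Entrywise expectation of a random matrix. -/
noncomputable def mExp {Ω : Type} [MeasurableSpace Ω] {N : ℕ} (μ : Measure Ω)
    (X : Ω → Matrix (Fin N) (Fin N) ℝ) : Matrix (Fin N) (Fin N) ℝ :=
  Matrix.of fun i j => ∫ ω, X ω i j ∂μ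

section L2OpNorm

open scoped Matrix.Norms.L2Operator

theorem specNorm_smul {N : ℕ} (c : ℝ) (X : Matrix (Fin N) (Fin N) ℝ) :
    specNorm (c • X) = |c| * specNorm X :=
  (norm_smul c X).trans (by rw [Real.norm_eq_abs]; rfl)

theorem summable_pow_two_mul_of_specNorm_lt_one {N : ℕ} {X : Matrix (Fin N) (Fin N) ℝ}
    (hX : specNorm X < 1) : Summable fun t : ℕ => X ^ (2 * t) := by
  have hX2 : ‖X ^ 2‖ < 1 := calc
    ‖X ^ 2‖ ≤ ‖X‖ ^ 2 := norm_pow_le' X two_pos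
    _ < 1 := pow_lt_one₀ (norm_nonneg _) hX two_ne_zero
  simpa only [pow_mul] using summable_geometric_of_norm_lt_one hX2

end L2OpNorm

theorem linear_recursion_eq_sum {n R : Type*} [Fintype n] [DecidableEq n] [CommSemiring R]
    (A B : Matrix n n R) {x u : ℕ → n → R} (h0 : x 0 = 0)
    (h : ∀ t, x (t + 1) = A *ᵥ x t + B *ᵥ u t) (t : ℕ) :
    x t = ∑ k ∈ Finset.range t, (A ^ (t - 1 - k) * B) *ᵥ u k := by
  induction t with
  | zero => simp [h0]
  | succ t ih =>
    rw [h, ih, Matrix.mulVec_sum, Finset.sum_range_succ, Nat.add_sub_cancel, Nat.sub_self,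
      pow_zero, Matrix.one_mul]
    congr 1
    refine Finset.sum_congr rfl fun k hk => ?_
    rw [mulVec_mulVec, ← Matrix.mul_assoc, ← pow_succ']
    congr 3
    have := Finset.mem_range.mp hk
    omega

theorem vecMulVec_mulVec_mulVec {m n R : Type*} [Fintype m] [CommSemiring R]
    (A B : Matrix n m R) (x y : m → R) :
    vecMulVec (A *ᵥ x) (B *ᵥ y) = A * vecMulVec x y * Bᵀ := by
  rw [mul_vecMulVec, vecMulVec_mul, vecMul_transpose]

theorem vecMulVec_sum_sum {ι κ m n R : Type*} [NonUnitalNonAssocSemiring R] (s : Finset ι)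
    (s' : Finset κ) (x : ι → m → R) (y : κ → n → R) :
    vecMulVec (∑ k ∈ s, x k) (∑ k' ∈ s', y k')
      = ∑ k ∈ s, ∑ k' ∈ s', vecMulVec (x k) (y k') := by
  ext i j
  simp only [vecMulVec_apply, Finset.sum_apply, Matrix.sum_apply, Finset.sum_mul_sum]

theorem Matrix.IsSymm.trace_pow_mul_mul_transpose {n R : Type*} [Fintype n] [DecidableEq n]
    [CommSemiring R] {A : Matrix n n R} (hA : A.IsSymm) (B : Matrix n n R) (k : ℕ) :
    (A ^ k * B * (A ^ k * B)ᵀ).trace = (Bᵀ * A ^ (2 * k) * B).trace := by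
  rw [trace_mul_comm, transpose_mul, transpose_pow, hA.eq, two_mul, pow_add]
  simp only [Matrix.mul_assoc]

theorem HasSum.trace_mul_mul {ι n R : Type*} [Fintype n] [CommRing R] [TopologicalSpace R]
    [IsTopologicalRing R] {f : ι → Matrix n n R} {W : Matrix n n R} (hf : HasSum f W)
    (A B : Matrix n n R) : HasSum (fun k => (A * f k * B).trace) (A * W * B).trace :=
  ((hf.mul_left A).mul_right B).map (traceAddMonoidHom n R) (continuous_id.matrix_trace)

theorem trace_transpose_smul_sub_mul_mul_smul_sub {n R : Type*} [Fintype n] [DecidableEq n]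
    [CommRing R] {S D W : Matrix n n R} (hS : S.IsSymm) (hD : D.IsSymm) (hSW : Commute S W)
    (ψ : R) :
    ((ψ • S - D)ᵀ * W * (ψ • S - D)).trace
      = ψ ^ 2 * (W * S ^ 2).trace + (W * D ^ 2).trace - 2 * ψ * (W * S * D).trace := by
  have hSWS : (S * W * S).trace = (W * S ^ 2).trace := by rw [hSW.eq, Matrix.mul_assoc, sq]
  have hDWD : (D * W * D).trace = (W * D ^ 2).trace := by
    rw [trace_mul_cycle, trace_mul_comm, sq]
  have hSWD : (S * W * D).trace = (W * S * D).trace := by rw [hSW.eq]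
  have hDWS : (D * W * S).trace = (W * S * D).trace := by rw [Matrix.mul_assoc, trace_mul_comm]
  rw [transpose_sub, transpose_smul, hS.eq, hD.eq]
  simp only [Matrix.sub_mul, Matrix.mul_sub, Matrix.smul_mul, Matrix.mul_smul, trace_sub,
    trace_smul, smul_eq_mul, hSWS, hDWD, hSWD, hDWS]
  ring

section Expectation

variable {Ω : Type} [MeasurableSpace Ω] {μ : Measure Ω} {N : ℕ}

theorem mExp_sum {ι : Type*} (s : Finset ι) {X : ι → Ω → Matrix (Fin N) (Fin N) ℝ}
    (hX : ∀ k ∈ s, ∀ i j, Integrable (fun ω => X k ω i j) μ) :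
    mExp μ (fun ω => ∑ k ∈ s, X k ω) = ∑ k ∈ s, mExp μ (X k) := by
  ext i j
  simp only [mExp, of_apply, Matrix.sum_apply]
  exact integral_finsetSum s fun k hk => hX k hk i j

theorem integrable_mul_mul_apply (A B : Matrix (Fin N) (Fin N) ℝ)
    {X : Ω → Matrix (Fin N) (Fin N) ℝ} (hX : ∀ i j, Integrable (fun ω => X ω i j) μ)
    (i j : Fin N) :
    Integrable (fun ω => (A * X ω * B) i j) μ := by
  simp only [mul_apply, Finset.sum_mul]
  exact integrable_finsetSum _ fun m _ => integrable_finsetSum _ fun l _ =>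
    ((hX l m).const_mul (A i l)).mul_const (B m j)

theorem mExp_mul_mul (A B : Matrix (Fin N) (Fin N) ℝ)
    {X : Ω → Matrix (Fin N) (Fin N) ℝ} (hX : ∀ i j, Integrable (fun ω => X ω i j) μ) :
    mExp μ (fun ω => A * X ω * B) = A * mExp μ X * B := by
  ext i j
  simp only [mExp, of_apply, mul_apply, Finset.sum_mul]
  rw [integral_finsetSum _ fun m _ => integrable_finsetSum _ fun l _ =>
    ((hX l m).const_mul (A i l)).mul_const (B m j)]
  refine Finset.sum_congr rfl fun m _ => ?_
  rw [integral_finsetSum _ fun l _ => ((hX l m).const_mul (A i l)).mul_const (B m j)]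
  refine Finset.sum_congr rfl fun l _ => ?_
  rw [integral_mul_const, integral_const_mul]

variable {σ : ℝ} {n : ℕ → Ω → Fin N → ℝ}

theorem mExp_vecMulVec_of_uncorrelated
    (hn_cov : ∀ τ i j, ∫ ω, n τ ω i * n τ ω j ∂μ = σ ^ 2 * (1 : Matrix (Fin N) (Fin N) ℝ) i j)
    (hn_cross : ∀ τ τ', τ ≠ τ' → ∀ i j, ∫ ω, n τ ω i * n τ' ω j ∂μ = 0) (τ τ' : ℕ) :
    mExp μ (fun ω => vecMulVec (n τ ω) (n τ' ω)) = if τ = τ' then σ ^ 2 • 1 else 0 := by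
  ext i j
  simp only [mExp, of_apply, vecMulVec_apply]
  split_ifs with h
  · subst h; simp [hn_cov]
  · simp [hn_cross τ τ' h]

theorem mExp_vecMulVec_sum_mulVec_of_uncorrelated
    (hn_int : ∀ τ τ' i j, Integrable (fun ω => n τ ω i * n τ' ω j) μ)
    (hn_cov : ∀ τ i j, ∫ ω, n τ ω i * n τ ω j ∂μ = σ ^ 2 * (1 : Matrix (Fin N) (Fin N) ℝ) i j)
    (hn_cross : ∀ τ τ', τ ≠ τ' → ∀ i j, ∫ ω, n τ ω i * n τ' ω j ∂μ = 0)
    (s : Finset ℕ) (C : ℕ → Matrix (Fin N) (Fin N) ℝ) :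
    mExp μ (fun ω => vecMulVec (∑ k ∈ s, C k *ᵥ n k ω) (∑ k ∈ s, C k *ᵥ n k ω))
      = σ ^ 2 • ∑ k ∈ s, C k * (C k)ᵀ := by
  have hint : ∀ τ τ' i j, Integrable (fun ω => vecMulVec (n τ ω) (n τ' ω) i j) μ := hn_int
  simp_rw [vecMulVec_sum_sum, vecMulVec_mulVec_mulVec, ← Finset.sum_product']
  rw [mExp_sum _ fun p _ => integrable_mul_mul_apply _ _ (hint p.1 p.2)]
  simp only [mExp_mul_mul _ _ (hint _ _), mExp_vecMulVec_of_uncorrelated hn_cov hn_cross]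
  rw [Finset.sum_product]
  simp only [mul_ite, ite_mul, Matrix.mul_zero, Matrix.zero_mul, Finset.sum_ite_eq]
  rw [Finset.smul_sum]
  refine Finset.sum_congr rfl fun k hk => ?_
  rw [if_pos hk, Matrix.mul_smul, Matrix.mul_one, Matrix.smul_mul]

theorem trace_mExp_vecMulVec_of_linear_recursion {A B : Matrix (Fin N) (Fin N) ℝ}
    (hA : A.IsSymm)
    (hn_int : ∀ τ τ' i j, Integrable (fun ω => n τ ω i * n τ' ω j) μ)
    (hn_cov : ∀ τ i j, ∫ ω, n τ ω i * n τ ω j ∂μ = σ ^ 2 * (1 : Matrix (Fin N) (Fin N) ℝ) i j)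
    (hn_cross : ∀ τ τ', τ ≠ τ' → ∀ i j, ∫ ω, n τ ω i * n τ' ω j ∂μ = 0)
    {w : ℕ → Ω → Fin N → ℝ} (hw0 : ∀ ω, w 0 ω = 0)
    (hw : ∀ τ ω, w (τ + 1) ω = A *ᵥ w τ ω + B *ᵥ n τ ω) (t : ℕ) :
    (mExp μ fun ω => vecMulVec (w t ω) (w t ω)).trace
      = σ ^ 2 * ∑ k ∈ Finset.range t, (Bᵀ * A ^ (2 * k) * B).trace := by
  have hw_sum : ∀ ω, w t ω = ∑ k ∈ Finset.range t, (A ^ (t - 1 - k) * B) *ᵥ n k ω :=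
    fun ω => linear_recursion_eq_sum A B (x := fun τ => w τ ω) (hw0 ω) (fun τ => hw τ ω) t
  simp only [hw_sum, mExp_vecMulVec_sum_mulVec_of_uncorrelated hn_int hn_cov hn_cross,
    trace_smul, trace_sum, hA.trace_pow_mul_mul_transpose, smul_eq_mul]
  rw [Finset.sum_range_reflect (fun k => (Bᵀ * A ^ (2 * k) * B).trace) t]

end Expectation

theorem stmt5_general {Ω : Type} [MeasurableSpace Ω] (μ : Measure Ω)
    {N : ℕ} (S D : Matrix (Fin N) (Fin N) ℝ) (hS : S.IsSymm) (hD : D.IsDiag)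
    (ψ σ : ℝ) (hψ : |ψ| * specNorm S < 1) (n : ℕ → Ω → Fin N → ℝ)
    (hn_int : ∀ τ τ' i j, Integrable (fun ω => n τ ω i * n τ' ω j) μ)
    (hn_cov : ∀ τ i j,
      ∫ ω, n τ ω i * n τ ω j ∂μ = σ ^ 2 * (1 : Matrix (Fin N) (Fin N) ℝ) i j)
    (hn_cross : ∀ τ τ', τ ≠ τ' → ∀ i j, ∫ ω, n τ ω i * n τ' ω j ∂μ = 0)
    (w : ℕ → Ω → Fin N → ℝ) (hw0 : ∀ ω, w 0 ω = 0)
    (hw : ∀ τ ω, w (τ + 1) ω = (ψ • S).mulVec (w τ ω) + (ψ • S - D).mulVec (n τ ω))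
    (W₀ : Matrix (Fin N) (Fin N) ℝ) (hW₀ : W₀ = ∑' t : ℕ, ψ ^ (2 * t) • S ^ (2 * t)) :
    Tendsto
      (fun t : ℕ => (1 / N : ℝ) * (mExp μ (fun ω => vecMulVec (w t ω) (w t ω))).trace)
      atTop
      (nhds ((σ ^ 2 / N) * ((ψ • S - D)ᵀ * W₀ * (ψ • S - D)).trace)) ∧
    (σ ^ 2 / N) * ((ψ • S - D)ᵀ * W₀ * (ψ • S - D)).trace
      = (σ ^ 2 / N) * (ψ ^ 2 * (W₀ * S ^ 2).trace + (W₀ * D ^ 2).trace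
          - 2 * ψ * (W₀ * S * D).trace) := by
  simp only [← smul_pow] at hW₀
  have hW : HasSum (fun t : ℕ => (ψ • S) ^ (2 * t)) W₀ :=
    hW₀ ▸ (summable_pow_two_mul_of_specNorm_lt_one ((specNorm_smul ψ S).trans_lt hψ)).hasSum
  have hSW : Commute S W₀ :=
    hW₀ ▸ Commute.tsum_right S fun t => ((Commute.refl S).smul_right ψ).pow_right _
  refine ⟨?_, by rw [trace_transpose_smul_sub_mul_mul_smul_sub hS hD.isSymm hSW]⟩
  simp only [trace_mExp_vecMulVec_of_linear_recursion (hS.smul ψ) hn_int hn_cov hn_cross hw0 hw]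
  convert ((hW.trace_mul_mul (ψ • S - D)ᵀ (ψ • S - D)).tendsto_sum_nat.const_mul (σ ^ 2 / N))
    using 2
  ring

/-- Proposition 2, deterministic ARMA.
For the recursion `w̃_t = ψ S w̃_{t−1} + (ψS − D) n_{t−1}` with `|ψ|·‖S‖₂ < 1` and
zero-mean uncorrelated noise of covariance `σ² I`, the asymptotic average noise power per
node `ζ = lim_{t→∞} (1/N)·tr(E[w̃_t w̃_tᵀ])` exists, equals
`(σ²/N)·tr((ψS − D)ᵀ W₀ (ψS − D))`, which in turn equals
`(σ²/N)·(ψ² tr(W₀ S²) + tr(W₀ D²) − 2ψ tr(W₀ S D))`, where `W₀ = Σ_t ψ^{2t} S^{2t}`. -/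
theorem stmt5 {Ω : Type} [MeasurableSpace Ω] (μ : Measure Ω) [IsProbabilityMeasure μ]
    {N : ℕ} (hN : 0 < N) (S D : Matrix (Fin N) (Fin N) ℝ) (hS : S.IsSymm) (hD : D.IsDiag)
    (ψ σ : ℝ) (hψ : |ψ| * specNorm S < 1) (n : ℕ → Ω → Fin N → ℝ)
    (hn_int : ∀ τ τ' i j, Integrable (fun ω => n τ ω i * n τ' ω j) μ)
    (hn_mean : ∀ τ i, ∫ ω, n τ ω i ∂μ = 0)
    (hn_cov : ∀ τ i j,
      ∫ ω, n τ ω i * n τ ω j ∂μ = σ ^ 2 * (1 : Matrix (Fin N) (Fin N) ℝ) i j)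
    (hn_cross : ∀ τ τ', τ ≠ τ' → ∀ i j, ∫ ω, n τ ω i * n τ' ω j ∂μ = 0)
    (w : ℕ → Ω → Fin N → ℝ) (hw0 : ∀ ω, w 0 ω = 0)
    (hw : ∀ τ ω, w (τ + 1) ω = (ψ • S).mulVec (w τ ω) + (ψ • S - D).mulVec (n τ ω))
    (W₀ : Matrix (Fin N) (Fin N) ℝ) (hW₀ : W₀ = ∑' t : ℕ, ψ ^ (2 * t) • S ^ (2 * t)) :
    Tendsto
      (fun t : ℕ => (1 / N : ℝ) * (mExp μ (fun ω => vecMulVec (w t ω) (w t ω))).trace)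
      atTop
      (nhds ((σ ^ 2 / N) * ((ψ • S - D)ᵀ * W₀ * (ψ • S - D)).trace)) ∧
    (σ ^ 2 / N) * ((ψ • S - D)ᵀ * W₀ * (ψ • S - D)).trace
      = (σ ^ 2 / N) * (ψ ^ 2 * (W₀ * S ^ 2).trace + (W₀ * D ^ 2).trace
          - 2 * ψ * (W₀ * S * D).trace) :=
  stmt5_general μ S D hS hD ψ σ hψ n hn_int hn_cov hn_cross w hw0 hw W₀ hW₀
end

section
/- Fix integers 1 ≤ k ≤ K. On a probability space, let S_{k−1}, S_k, …, S_{K−1} be independent, identically distributed integrable random N×N real symmetric matrices with common mean S̄ = E[S_t], and let n be a random vector in ℝ^N, independent of (S_{k−1},…,S_{K−1}), with E[n] = 0 and E[n nᵀ] = σ² I. Let Φ_{k:κ−1} = S_{κ−1} S_{κ−2} ⋯ S_k (with Φ_{k:κ−1} = I when κ ≤ k), let H = Σ_{κ=k}^{K} φ_κ Φ_{k:κ−1} for real coefficients φ_κ, let G = Hᵀ H, let D be a deterministic N×N real diagonal matrix, and set ỹ = H (S_{k−1} − D) n. Assuming all the stated expectations exist, (1/N)·tr(E[ỹ ỹᵀ])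 = (σ²/N)·( tr(E[G S_{k−1}²]) + tr(E[G] D²) − 2 tr(E[G] S̄ D) ). -/
open MeasureTheory ProbabilityTheory Matrix

/-- The (entrywise) measurable space structure on real matrices. -/
instance matMS {N : ℕ} : MeasurableSpace (Matrix (Fin N) (Fin N) ℝ) :=
  (inferInstance : MeasurableSpace (Fin N → Fin N → ℝ))

/-- The left-continued matrix product `Φ_{a:b−1} = S_{b−1} S_{b−2} ⋯ S_a`
(equal to `I` when `b ≤ a`). -/
def phiProd {Ω : Type} {N : ℕ} (S : ℕ → Ω → Matrix (Fin N) (Fin N) ℝ) (a b : ℕ) (ω : Ω) :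
    Matrix (Fin N) (Fin N) ℝ :=
  (((List.range (b - a)).reverse).map (fun j => S (a + j) ω)).prod

/-- Heterogeneous index type for the joint family consisting of the random vector `n`
(index `none`) and the random matrices (index `some τ`). -/
def famType (N : ℕ) {ι : Type} : Option ι → Type
  | none => Fin N → ℝ
  | some _ => Matrix (Fin N) (Fin N) ℝ

/-- Measurable space structures for the joint family. -/
def famMS (N : ℕ) {ι : Type} : (i : Option ι) → MeasurableSpace (famType N i)
  | none => (inferInstance : MeasurableSpace (Fin N → ℝ))
  | some _ => matMS

/-- The joint family of random variables: the vector `n` at `none`, matrix `S τ` at `some τ`. -/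
def fam {Ω : Type} {N : ℕ} {ι : Type} (S : ι → Ω → Matrix (Fin N) (Fin N) ℝ)
    (n : Ω → Fin N → ℝ) : (i : Option ι) → Ω → famType N i
  | none => n
  | some τ => S τ

/-!
Put `M = H (S_{k-1} - D)`, so that `ỹ = M n`. Since `M` is independent of `n` and
`E[n nᵀ] = σ² I`, we get `E[ỹ ỹᵀ] = σ² E[M Mᵀ]`; as `S_{k-1}` and `D` are symmetric,
`tr (M Mᵀ) = tr (G S_{k-1}²) + tr (G D²) - 2 tr (G S_{k-1} D)`. Finally `G` is a function of
`S_k, …, S_{K-1}` alone, hence independent of `S_{k-1}`, so `E[G S_{k-1}] = E[G] S̄`.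

Integrability is only assumed for monomials of degree at most two in each `S_τ`. Every entry of
`H` and of `M` is a combination of monomials of degree at most one in each `S_τ`
(`multilinearSpan`), so all the products that get integrated have the assumed shape.
-/

section MultilinearSpan

open scoped Pointwise

variable {Ω ι n : Type*}

def multilinearMonomials (S : ι → Ω → Matrix n n ℝ) (U : Finset ι) : Set (Ω → ℝ) :=
  {g | ∃ s ⊆ U, ∃ a b : ι → n, g = fun ω => ∏ τ ∈ s, S τ ω (a τ) (b τ)}

def multilinearSpan (S : ι → Ω → Matrix n n ℝ) (U : Finset ι) : Submodule ℝ (Ω → ℝ) :=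
  Submodule.span ℝ (multilinearMonomials S U)

variable {S : ι → Ω → Matrix n n ℝ} {U V : Finset ι}

lemma multilinearSpan_mono (h : U ⊆ V) : multilinearSpan S U ≤ multilinearSpan S V :=
  Submodule.span_mono fun _ ⟨s, hs, a, b, hg⟩ => ⟨s, hs.trans h, a, b, hg⟩

lemma const_mem_multilinearSpan [Nonempty n] (c : ℝ) : (fun _ => c) ∈ multilinearSpan S U := by
  have h1 : (fun _ => (1 : ℝ)) ∈ multilinearSpan S U :=
    Submodule.subset_span ⟨∅, Finset.empty_subset _, fun _ => Classical.arbitrary n,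
      fun _ => Classical.arbitrary n, by simp⟩
  convert Submodule.smul_mem _ c h1 using 1
  funext
  simp

lemma entry_mem_multilinearSpan {τ : ι} (hτ : τ ∈ U) (p q : n) :
    (fun ω => S τ ω p q) ∈ multilinearSpan S U :=
  Submodule.subset_span ⟨{τ}, by simpa using hτ, fun _ => p, fun _ => q, by simp⟩

lemma entry_mul_mem_multilinearSpan [DecidableEq ι] {τ : ι} (hτ : τ ∉ U) (p q : n)
    {g : Ω → ℝ} (hg : g ∈ multilinearSpan S U) :
    (fun ω => S τ ω p q * g ω) ∈ multilinearSpan S (insert τ U) := by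
  suffices multilinearSpan S U ≤
      (multilinearSpan S (insert τ U)).comap (LinearMap.mulLeft ℝ fun ω => S τ ω p q) from this hg
  refine Submodule.span_le.2 fun _ ⟨s, hs, a, b, hg⟩ => Submodule.subset_span ?_
  have hτs : τ ∉ s := fun h => hτ (hs h)
  refine ⟨insert τ s, Finset.insert_subset_insert τ hs, Function.update a τ p,
    Function.update b τ q, ?_⟩
  funext ω
  rw [hg, Finset.prod_insert hτs]
  simp only [LinearMap.mulLeft_apply, Pi.mul_apply, Function.update_self]
  congr 1
  exact Finset.prod_congr rfl fun σ hσ => by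
    rw [Function.update_of_ne (ne_of_mem_of_not_mem hσ hτs),
      Function.update_of_ne (ne_of_mem_of_not_mem hσ hτs)]

lemma mul_sub_apply_mem_multilinearSpan [DecidableEq ι] [Fintype n] {τ : ι} (hτ : τ ∉ U)
    {H : Ω → Matrix n n ℝ} (hH : ∀ i j, (fun ω => H ω i j) ∈ multilinearSpan S U)
    (D : Matrix n n ℝ) (i j : n) :
    (fun ω => (H ω * (S τ ω - D)) i j) ∈ multilinearSpan S (insert τ U) := by
  have hsum := Submodule.sum_mem (multilinearSpan S (insert τ U)) (t := .univ) fun l _ =>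
    Submodule.sub_mem _ (entry_mul_mem_multilinearSpan hτ l j (hH i l))
      (Submodule.smul_mem _ (D l j) (multilinearSpan_mono (Finset.subset_insert τ U) (hH i l)))
  convert hsum using 1
  funext ω
  simp only [Matrix.mul_apply, Matrix.sub_apply, Finset.sum_apply, Pi.sub_apply, Pi.smul_apply,
    smul_eq_mul]
  exact Finset.sum_congr rfl fun l _ => by ring

lemma mul_apply_mem_multilinearSpan_mul [Fintype n] {X Y : Ω → Matrix n n ℝ}
    (hX : ∀ i j, (fun ω => X ω i j) ∈ multilinearSpan S U)
    (hY : ∀ i j, (fun ω => Y ω i j) ∈ multilinearSpan S U) (i j : n) :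
    (fun ω => (X ω * Y ω) i j) ∈ multilinearSpan S U * multilinearSpan S U := by
  simpa only [Matrix.mul_apply, Finset.sum_fn, Pi.mul_apply] using Submodule.sum_mem _ (t := .univ)
    fun l _ => Submodule.mul_mem_mul (hX i l) (hY l j)

lemma multilinearSpan_le_mul [Nonempty n] :
    multilinearSpan S U ≤ multilinearSpan S U * multilinearSpan S U :=
  (Submodule.mul_one _).symm.le.trans
    (mul_le_mul_right (Submodule.one_le.2 (const_mem_multilinearSpan 1)) _)

lemma multilinearSpan_mul_mono (h : U ⊆ V) :
    multilinearSpan S U * multilinearSpan S U ≤ multilinearSpan S V * multilinearSpan S V :=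
  mul_le_mul' (multilinearSpan_mono h) (multilinearSpan_mono h)

lemma measurable_of_mem_multilinearSpan {m : MeasurableSpace Ω}
    (hS : ∀ τ ∈ U, ∀ p q, Measurable fun ω => S τ ω p q) {g : Ω → ℝ}
    (hg : g ∈ multilinearSpan S U) : Measurable g := by
  induction hg using Submodule.span_induction with
  | mem g hg =>
    obtain ⟨s, hs, a, b, rfl⟩ := hg
    exact Finset.measurable_prod _ fun τ hτ => hS τ (hs hτ) _ _
  | zero => exact measurable_const
  | add _ _ _ _ hg hh => exact hg.add hh
  | smul c _ _ hg => exact hg.const_smul c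

lemma measurable_of_mem_multilinearSpan_mul {m : MeasurableSpace Ω}
    (hS : ∀ τ ∈ U, ∀ p q, Measurable fun ω => S τ ω p q) {g : Ω → ℝ}
    (hg : g ∈ multilinearSpan S U * multilinearSpan S U) : Measurable g := by
  refine Submodule.mul_induction_on hg (fun g hg h hh => ?_) fun _ _ => Measurable.add
  exact (measurable_of_mem_multilinearSpan hS hg).mul (measurable_of_mem_multilinearSpan hS hh)

lemma integrable_of_mem_multilinearSpan_mul [DecidableEq ι] {m : MeasurableSpace Ω}
    {μ : Measure Ω}
    (hS : ∀ (a b c d : ι → n) (e f : ι → ℕ), Integrable (fun ω => ∏ τ ∈ U,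
      S τ ω (a τ) (b τ) ^ e τ * S τ ω (c τ) (d τ) ^ f τ) μ)
    {g : Ω → ℝ} (hg : g ∈ multilinearSpan S U * multilinearSpan S U) : Integrable g μ := by
  rw [multilinearSpan, Submodule.span_mul_span] at hg
  induction hg using Submodule.span_induction with
  | mem x hx =>
    obtain ⟨_, ⟨s, hs, a, b, rfl⟩, _, ⟨t, ht, c, d, rfl⟩, rfl⟩ := Set.mem_mul.1 hx
    convert hS a b c d (fun τ => if τ ∈ s then 1 else 0) (fun τ => if τ ∈ t then 1 else 0)
      using 2 with ω
    simp only [Pi.mul_apply, pow_ite, pow_one, pow_zero, Finset.prod_mul_distrib,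
      Finset.prod_ite_mem, Finset.inter_eq_right.2 hs, Finset.inter_eq_right.2 ht]
  | zero => exact integrable_zero _ _ _
  | add _ _ _ _ hx hy => exact hx.add hy
  | smul c _ _ hx => exact hx.smul c

end MultilinearSpan

section PhiProd

variable {Ω : Type} {N : ℕ} {S : ℕ → Ω → Matrix (Fin N) (Fin N) ℝ}

lemma phiProd_of_le {a b : ℕ} (h : b ≤ a) (ω : Ω) : phiProd S a b ω = 1 := by
  simp [phiProd, Nat.sub_eq_zero_of_le h]

lemma phiProd_succ {a m : ℕ} (h : a ≤ m) (ω : Ω) :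
    phiProd S a (m + 1) ω = S m ω * phiProd S a m ω := by
  simp [phiProd, Nat.succ_sub h, List.range_succ, Nat.add_sub_cancel' h]

lemma phiProd_apply_mem_multilinearSpan (a b : ℕ) (i j : Fin N) :
    (fun ω => phiProd S a b ω i j) ∈ multilinearSpan S (Finset.Ico a b) := by
  have : Nonempty (Fin N) := ⟨i⟩
  induction b generalizing i with
  | zero => simpa only [phiProd_of_le (Nat.zero_le a)] using const_mem_multilinearSpan _
  | succ m ih =>
    by_cases ham : a ≤ m
    · simp only [phiProd_succ ham, Matrix.mul_apply, Nat.Ico_succ_right_eq_insert_Ico ham]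
      have hsum := Submodule.sum_mem (multilinearSpan S (insert m (Finset.Ico a m))) (t := .univ)
        fun l _ => entry_mul_mem_multilinearSpan (by simp) i l (ih l)
      simpa only [Finset.sum_fn] using hsum
    · simpa only [phiProd_of_le (not_le.1 ham)] using const_mem_multilinearSpan _

lemma sum_smul_phiProd_apply_mem_multilinearSpan (φ : ℕ → ℝ) (k K : ℕ) (i j : Fin N) :
    (fun ω => (∑ κ ∈ Finset.Icc k K, φ κ • phiProd S k κ ω) i j)
      ∈ multilinearSpan S (Finset.Ico k K) := by
  simpa only [Matrix.sum_apply, Matrix.smul_apply, smul_eq_mul, Finset.sum_fn, Pi.smul_apply] using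
    Submodule.sum_mem _ fun κ hκ => Submodule.smul_mem _ (φ κ) <|
      multilinearSpan_mono (Finset.Ico_subset_Ico_right (Finset.mem_Icc.1 hκ).2)
        (phiProd_apply_mem_multilinearSpan k κ i j)

end PhiProd

section Expectation

variable {Ω : Type} [MeasurableSpace Ω] {μ : Measure Ω} {N : ℕ}
  {X Y : Ω → Matrix (Fin N) (Fin N) ℝ}

lemma integrable_trace (hX : ∀ i, Integrable (fun ω => X ω i i) μ) :
    Integrable (fun ω => (X ω).trace) μ := by
  simpa only [Matrix.trace, Matrix.diag, Finset.sum_fn] using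
    integrable_finsetSum Finset.univ fun i _ => hX i

lemma trace_mExp (hX : ∀ i, Integrable (fun ω => X ω i i) μ) :
    (mExp μ X).trace = ∫ ω, (X ω).trace ∂μ := by
  simp only [Matrix.trace, Matrix.diag, mExp, Matrix.of_apply]
  rw [integral_finsetSum _ fun i _ => hX i]

lemma integrable_mul_const_apply (hX : ∀ i j, Integrable (fun ω => X ω i j) μ)
    (C : Matrix (Fin N) (Fin N) ℝ) (i j : Fin N) :
    Integrable (fun ω => (X ω * C) i j) μ := by
  simp only [Matrix.mul_apply]
  exact integrable_finsetSum _ fun l _ => (hX i l).mul_const _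

lemma mExp_mul_const (hX : ∀ i j, Integrable (fun ω => X ω i j) μ)
    (C : Matrix (Fin N) (Fin N) ℝ) : mExp μ (fun ω => X ω * C) = mExp μ X * C := by
  ext i j
  simp only [mExp, Matrix.of_apply, Matrix.mul_apply]
  rw [integral_finsetSum _ fun l _ => (hX i l).mul_const _]
  simp only [integral_mul_const]

lemma integrable_mul_apply_of_indepFun
    (hXY : ∀ i p q j, IndepFun (fun ω => X ω i p) (fun ω => Y ω q j) μ)
    (hX : ∀ i j, Integrable (fun ω => X ω i j) μ) (hY : ∀ i j, Integrable (fun ω => Y ω i j) μ)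
    (i j : Fin N) : Integrable (fun ω => (X ω * Y ω) i j) μ := by
  simp only [Matrix.mul_apply]
  exact integrable_finsetSum _ fun l _ => (hXY i l l j).integrable_mul (hX i l) (hY l j)

lemma mExp_mul_of_indepFun
    (hXY : ∀ i p q j, IndepFun (fun ω => X ω i p) (fun ω => Y ω q j) μ)
    (hX : ∀ i j, Integrable (fun ω => X ω i j) μ) (hY : ∀ i j, Integrable (fun ω => Y ω i j) μ) :
    mExp μ (fun ω => X ω * Y ω) = mExp μ X * mExp μ Y := by
  ext i j
  have hint : ∀ l, Integrable (fun ω => X ω i l * Y ω l j) μ :=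
    fun l => (hXY i l l j).integrable_mul (hX i l) (hY l j)
  simp only [mExp, Matrix.of_apply, Matrix.mul_apply]
  rw [integral_finsetSum _ fun l _ => hint l]
  exact Finset.sum_congr rfl fun l _ => (hXY i l l j).integral_fun_mul_eq_mul_integral
    (hX i l).aestronglyMeasurable (hY l j).aestronglyMeasurable

lemma mExp_vecMulVec_mulVec {M : Ω → Matrix (Fin N) (Fin N) ℝ} {v : Ω → Fin N → ℝ} {σ : ℝ}
    (hMv : ∀ i a j b, IndepFun (fun ω => M ω i a * M ω j b) (fun ω => v ω a * v ω b) μ)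
    (hM : ∀ i a j b, Integrable (fun ω => M ω i a * M ω j b) μ)
    (hv : ∀ a b, Integrable (fun ω => v ω a * v ω b) μ)
    (hcov : ∀ a b, ∫ ω, v ω a * v ω b ∂μ = σ ^ 2 * (1 : Matrix (Fin N) (Fin N) ℝ) a b) :
    mExp μ (fun ω => vecMulVec (M ω *ᵥ v ω) (M ω *ᵥ v ω))
      = σ ^ 2 • mExp μ (fun ω => M ω * (M ω)ᵀ) := by
  ext i j
  have hterm : ∀ a b, Integrable (fun ω => M ω i a * M ω j b * (v ω a * v ω b)) μ :=
    fun a b => (hMv i a j b).integrable_mul (hM i a j b) (hv a b)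
  have hexpand : ∀ ω, (M ω *ᵥ v ω) i * (M ω *ᵥ v ω) j
      = ∑ a, ∑ b, M ω i a * M ω j b * (v ω a * v ω b) := fun ω => by
    simp only [Matrix.mulVec, dotProduct, Finset.sum_mul_sum]
    exact Finset.sum_congr rfl fun a _ => Finset.sum_congr rfl fun b _ => by ring
  simp only [mExp, Matrix.of_apply, Matrix.smul_apply, Matrix.vecMulVec_apply, hexpand,
    Matrix.mul_apply, Matrix.transpose_apply, smul_eq_mul]
  rw [integral_finsetSum _ fun a _ => integrable_finsetSum _ fun b _ => hterm a b,
    integral_finsetSum _ fun a _ => hM i a j a, Finset.mul_sum]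
  refine Finset.sum_congr rfl fun a _ => ?_
  rw [integral_finsetSum _ fun b _ => hterm a b, Finset.sum_eq_single a]
  · rw [(hMv i a j a).integral_fun_mul_eq_mul_integral (hM i a j a).aestronglyMeasurable
      (hv a a).aestronglyMeasurable, hcov, Matrix.one_apply_eq]
    ring
  · intro b _ hb
    rw [(hMv i a j b).integral_fun_mul_eq_mul_integral (hM i a j b).aestronglyMeasurable
      (hv a b).aestronglyMeasurable, hcov, Matrix.one_apply_ne (Ne.symm hb)]
    ring
  · simp

end Expectation

section Independence

variable {Ω : Type} {mΩ : MeasurableSpace Ω} {μ : Measure Ω}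

lemma ProbabilityTheory.iIndepFun.indepFun_of_measurable_iSup {ι γ δ : Type*} {β : ι → Type*}
    {m : ∀ i, MeasurableSpace (β i)} {f : ∀ i, Ω → β i} (hf : ∀ i, Measurable (f i))
    (h : iIndepFun f μ) {s t : Set ι} (hst : Disjoint s t) [MeasurableSpace γ]
    [MeasurableSpace δ] {X : Ω → γ} {Y : Ω → δ}
    (hX : Measurable[⨆ i ∈ s, (m i).comap (f i)] X)
    (hY : Measurable[⨆ i ∈ t, (m i).comap (f i)] Y) : IndepFun X Y μ := by
  rw [IndepFun_iff_Indep]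
  exact indep_of_indep_of_le_right (indep_of_indep_of_le_left
    (indep_iSup_of_disjoint (fun i => (hf i).comap_le) h hst) hX.comap_le) hY.comap_le

variable {N : ℕ} {ι : Type} {S : ι → Ω → Matrix (Fin N) (Fin N) ℝ} {n : Ω → Fin N → ℝ}
  {s : Set (Option ι)}

lemma measurable_fam (hS : ∀ τ, Measurable (S τ)) (hn : Measurable n) :
    ∀ i, Measurable[mΩ, famMS N i] (fam S n i)
  | none => hn
  | some τ => hS τ

lemma measurable_iSup_comap_fam_some {τ : ι} (h : some τ ∈ s) (p q : Fin N) :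
    Measurable[⨆ x ∈ s, (famMS N x).comap (fam S n x)] fun ω => S τ ω p q := by
  have hS : Measurable[⨆ x ∈ s, (famMS N x).comap (fam S n x)] (S τ) :=
    (comap_measurable (fam S n (some τ))).mono
      (le_iSup₂ (f := fun x (_ : x ∈ s) => (famMS N x).comap (fam S n x)) _ h) le_rfl
  exact (measurable_pi_apply q).comp ((measurable_pi_apply p).comp hS)

lemma measurable_iSup_comap_fam_none (h : none ∈ s) :
    Measurable[⨆ x ∈ s, (famMS N x).comap (fam S n x)] n :=
  (comap_measurable (fam S n none)).mono
    (le_iSup₂ (f := fun x (_ : x ∈ s) => (famMS N x).comap (fam S n x)) _ h) le_rfl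

end Independence

section FamSubtype

variable {Ω : Type} {mΩ : MeasurableSpace Ω} {μ : Measure Ω} {N : ℕ}
  {S : ℕ → Ω → Matrix (Fin N) (Fin N) ℝ} {n : Ω → Fin N → ℝ} {T : Finset ℕ}

lemma measurable_iSup_comap_fam_subtype {U : Finset ℕ} (hUT : U ⊆ T) {g : Ω → ℝ}
    (hg : g ∈ multilinearSpan S U * multilinearSpan S U) :
    Measurable[⨆ x ∈ some '' {τ : {τ // τ ∈ T} | τ.1 ∈ U},
      (famMS N x).comap (fam (fun τ : {τ // τ ∈ T} => S τ.1) n x)] g :=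
  measurable_of_mem_multilinearSpan_mul (fun τ hτ =>
    measurable_iSup_comap_fam_some (S := fun τ : {τ // τ ∈ T} => S τ.1) (τ := ⟨τ, hUT hτ⟩)
      (Set.mem_image_of_mem some (show ⟨τ, hUT hτ⟩ ∈ {σ : {τ // τ ∈ T} | σ.1 ∈ U} from hτ))) hg

variable
  (hIndep : iIndepFun (m := fun i : Option {τ // τ ∈ T} => famMS N i)
    (fam (fun τ : {τ // τ ∈ T} => S τ.1) n) μ)
  (hS : ∀ τ ∈ T, Measurable (S τ)) (hn : Measurable n)
include hIndep hS hn

lemma indepFun_of_mem_multilinearSpan_mul_of_disjoint {U V : Finset ℕ} (hUV : Disjoint U V)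
    (hUT : U ⊆ T) (hVT : V ⊆ T) {X Y : Ω → ℝ}
    (hX : X ∈ multilinearSpan S U * multilinearSpan S U)
    (hY : Y ∈ multilinearSpan S V * multilinearSpan S V) : IndepFun X Y μ :=
  hIndep.indepFun_of_measurable_iSup
    (measurable_fam (fun τ : {τ // τ ∈ T} => hS τ.1 τ.2) hn)
    ((Set.disjoint_image_iff (Option.some_injective _)).2
      (Set.disjoint_left.2 fun _ hU hV => Finset.disjoint_left.1 hUV hU hV))
    (measurable_iSup_comap_fam_subtype hUT hX) (measurable_iSup_comap_fam_subtype hVT hY)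

lemma indepFun_comp_noise_of_mem_multilinearSpan_mul {X : Ω → ℝ}
    (hX : X ∈ multilinearSpan S T * multilinearSpan S T) {β : Type*} [MeasurableSpace β]
    {f : (Fin N → ℝ) → β} (hf : Measurable f) : IndepFun X (fun ω => f (n ω)) μ := by
  exact hIndep.indepFun_of_measurable_iSup
    (measurable_fam (fun τ : {τ // τ ∈ T} => hS τ.1 τ.2) hn) (by simp)
    (measurable_iSup_comap_fam_subtype subset_rfl hX)
    (hf.comp (measurable_iSup_comap_fam_none (S := fun τ : {τ // τ ∈ T} => S τ.1)
      (Set.mem_singleton none)))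

end FamSubtype

lemma Matrix.trace_mul_sub_mul_transpose {n R : Type*} [Fintype n] [DecidableEq n] [CommRing R]
    (H A D : Matrix n n R) (hA : A.IsSymm) (hD : D.IsSymm) :
    ((H * (A - D)) * (H * (A - D))ᵀ).trace
      = (Hᵀ * H * A ^ 2).trace + (Hᵀ * H * D ^ 2).trace - 2 * (Hᵀ * H * A * D).trace := by
  have hDA : (Hᵀ * H * D * A).trace = (Hᵀ * H * A * D).trace := by
    rw [← Matrix.trace_transpose]
    simp only [Matrix.transpose_mul, Matrix.transpose_transpose, hA.eq, hD.eq, Matrix.mul_assoc]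
    rw [Matrix.trace_mul_comm, Matrix.mul_assoc, Matrix.trace_mul_comm D]
    simp only [Matrix.mul_assoc]
  have hcyc : ((H * (A - D)) * (H * (A - D))ᵀ).trace = (Hᵀ * H * ((A - D) * (A - D))).trace := by
    rw [Matrix.transpose_mul, Matrix.transpose_sub, hA.eq, hD.eq, Matrix.trace_mul_comm]
    simp only [Matrix.mul_assoc]
    rw [Matrix.trace_mul_comm (A - D)]
    simp only [Matrix.mul_assoc]
  rw [hcyc]
  simp only [Matrix.mul_sub, Matrix.sub_mul, Matrix.trace_sub, pow_two, ← Matrix.mul_assoc, hDA]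
  ring

section FilteredNoise

variable {Ω : Type} [MeasurableSpace Ω] {μ : Measure Ω} {N : ℕ}

lemma trace_mExp_vecMulVec_filtered_noise {H A M G : Ω → Matrix (Fin N) (Fin N) ℝ}
    {v : Ω → Fin N → ℝ} {σ : ℝ} {D : Matrix (Fin N) (Fin N) ℝ}
    (hA : ∀ ω, (A ω).IsSymm) (hD : D.IsSymm)
    (hM : ∀ ω, M ω = H ω * (A ω - D)) (hG : ∀ ω, G ω = (H ω)ᵀ * H ω)
    (hMv : ∀ i a j b, IndepFun (fun ω => M ω i a * M ω j b) (fun ω => v ω a * v ω b) μ)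
    (hMM : ∀ i a j b, Integrable (fun ω => M ω i a * M ω j b) μ)
    (hv : ∀ a b, Integrable (fun ω => v ω a * v ω b) μ)
    (hcov : ∀ a b, ∫ ω, v ω a * v ω b ∂μ = σ ^ 2 * (1 : Matrix (Fin N) (Fin N) ℝ) a b)
    (hGA : ∀ i p q j, IndepFun (fun ω => G ω i p) (fun ω => A ω q j) μ)
    (hGA2 : ∀ i p q j, IndepFun (fun ω => G ω i p) (fun ω => (A ω * A ω) q j) μ)
    (hGint : ∀ i j, Integrable (fun ω => G ω i j) μ)
    (hAint : ∀ i j, Integrable (fun ω => A ω i j) μ)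
    (hA2int : ∀ i j, Integrable (fun ω => (A ω * A ω) i j) μ) :
    (mExp μ (fun ω => vecMulVec (M ω *ᵥ v ω) (M ω *ᵥ v ω))).trace
      = σ ^ 2 * ((mExp μ (fun ω => G ω * A ω ^ 2)).trace + (mExp μ G * D ^ 2).trace
        - 2 * (mExp μ G * mExp μ A * D).trace) := by
  have hMMt : ∀ i, Integrable (fun ω => (M ω * (M ω)ᵀ) i i) μ := fun i => by
    simpa only [Matrix.mul_apply, Matrix.transpose_apply, Finset.sum_fn] using
      integrable_finsetSum Finset.univ fun a _ => hMM i a i a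
  have hGA2int : ∀ i j, Integrable (fun ω => (G ω * A ω ^ 2) i j) μ := by
    simpa only [pow_two] using integrable_mul_apply_of_indepFun hGA2 hGint hA2int
  have hGAint := integrable_mul_apply_of_indepFun hGA hGint hAint
  have hGADint := integrable_mul_const_apply hGAint D
  have hGD2int := integrable_mul_const_apply hGint (D ^ 2)
  have hexpand : ∀ ω, (M ω * (M ω)ᵀ).trace
      = (G ω * A ω ^ 2).trace + (G ω * D ^ 2).trace - 2 * (G ω * A ω * D).trace := fun ω => by
    rw [hM, hG, Matrix.trace_mul_sub_mul_transpose _ _ _ (hA ω) hD]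
  have h1 := integrable_trace fun i => hGA2int i i
  have h2 := integrable_trace fun i => hGD2int i i
  have h3 := integrable_trace fun i => hGADint i i
  rw [mExp_vecMulVec_mulVec hMv hMM hv hcov, Matrix.trace_smul, trace_mExp hMMt, smul_eq_mul,
    integral_congr_ae (.of_forall hexpand), integral_sub,
    integral_add h1 h2, integral_const_mul, ← trace_mExp fun i => hGA2int i i,
    ← trace_mExp fun i => hGD2int i i, ← trace_mExp fun i => hGADint i i, mExp_mul_const hGint,
    mExp_mul_const hGAint, mExp_mul_of_indepFun hGA hGint hAint]
  exacts [h1.add h2, h3.const_mul 2]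

end FilteredNoise

theorem stmt7_general {Ω : Type} [MeasurableSpace Ω] (μ : Measure Ω)
    {N : ℕ} (hN : 0 < N) (k K : ℕ) (hk : 1 ≤ k) (hkK : k ≤ K)
    (S : ℕ → Ω → Matrix (Fin N) (Fin N) ℝ) (n : Ω → Fin N → ℝ)
    (hmeas : ∀ τ ∈ Finset.Icc (k - 1) (K - 1), Measurable (S τ))
    (hnmeas : Measurable n)
    (hsymm : ∀ τ ∈ Finset.Icc (k - 1) (K - 1), ∀ ω, (S τ ω).IsSymm)
    (hS_int : ∀ τ ∈ Finset.Icc (k - 1) (K - 1), ∀ i j, Integrable (fun ω => S τ ω i j) μ)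
    -- all the expectations appearing below exist:
    (hIntS : ∀ (a b c d : ℕ → Fin N) (e f : ℕ → ℕ),
      Integrable (fun ω => ∏ τ ∈ Finset.Icc (k - 1) (K - 1),
        (S τ ω (a τ) (b τ)) ^ (e τ) * (S τ ω (c τ) (d τ)) ^ (f τ)) μ)
    (hIntSn : ∀ (i j : Fin N) (a b c d : ℕ → Fin N) (e f : ℕ → ℕ),
      Integrable (fun ω => (∏ τ ∈ Finset.Icc (k - 1) (K - 1),
        (S τ ω (a τ) (b τ)) ^ (e τ) * (S τ ω (c τ) (d τ)) ^ (f τ)) * (n ω i * n ω j)) μ)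
    -- the matrices are i.i.d. and `n` is independent of them:
    (hIndep : iIndepFun (m := fun i : Option {τ : ℕ // τ ∈ Finset.Icc (k - 1) (K - 1)} => famMS N i)
      (fam (fun τ : {τ : ℕ // τ ∈ Finset.Icc (k - 1) (K - 1)} => S τ.1) n) μ)
    (Sbar : Matrix (Fin N) (Fin N) ℝ)
    (hSbar : ∀ τ ∈ Finset.Icc (k - 1) (K - 1), mExp μ (S τ) = Sbar)
    (σ : ℝ)
    (hn_cov : ∀ i j, ∫ ω, n ω i * n ω j ∂μ = σ ^ 2 * (1 : Matrix (Fin N) (Fin N) ℝ) i j)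
    (φ : ℕ → ℝ) (D : Matrix (Fin N) (Fin N) ℝ) (hD : D.IsDiag)
    (H : Ω → Matrix (Fin N) (Fin N) ℝ)
    (hH : ∀ ω, H ω = ∑ κ ∈ Finset.Icc k K, φ κ • phiProd S k κ ω)
    (G : Ω → Matrix (Fin N) (Fin N) ℝ) (hG : ∀ ω, G ω = (H ω)ᵀ * H ω)
    (y : Ω → Fin N → ℝ)
    (hy : ∀ ω, y ω = (H ω * (S (k - 1) ω - D)).mulVec (n ω)) :
    (1 / N : ℝ) * (mExp μ (fun ω => vecMulVec (y ω) (y ω))).trace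
      = (σ ^ 2 / N) *
        ((mExp μ (fun ω => G ω * (S (k - 1) ω) ^ 2)).trace
          + (mExp μ G * D ^ 2).trace - 2 * (mExp μ G * Sbar * D).trace) := by
  have : Nonempty (Fin N) := ⟨⟨0, hN⟩⟩
  have hk1 : k - 1 ∈ Finset.Icc (k - 1) (K - 1) := Finset.mem_Icc.2 ⟨le_rfl, by omega⟩
  have hU : insert (k - 1) (Finset.Ico k K) ⊆ Finset.Icc (k - 1) (K - 1) := by
    intro τ; simp only [Finset.mem_insert, Finset.mem_Ico, Finset.mem_Icc]; omega
  have hIco := (Finset.subset_insert (k - 1) (Finset.Ico k K)).trans hU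
  have hHspan : ∀ i j, (fun ω => H ω i j) ∈ multilinearSpan S (Finset.Ico k K) := by
    simpa only [hH] using sum_smul_phiProd_apply_mem_multilinearSpan φ k K
  have hMentry : ∀ i j, (fun ω => (H ω * (S (k - 1) ω - D)) i j)
      ∈ multilinearSpan S (Finset.Icc (k - 1) (K - 1)) := fun i j =>
    multilinearSpan_mono hU (mul_sub_apply_mem_multilinearSpan (by simp; omega) hHspan D i j)
  have hMspan : ∀ i a j b,
      (fun ω => (H ω * (S (k - 1) ω - D)) i a * (H ω * (S (k - 1) ω - D)) j b)
        ∈ multilinearSpan S (Finset.Icc (k - 1) (K - 1))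
          * multilinearSpan S (Finset.Icc (k - 1) (K - 1)) := fun i a j b =>
    Submodule.mul_mem_mul (hMentry i a) (hMentry j b)
  have hGspan : ∀ i j, (fun ω => G ω i j)
      ∈ multilinearSpan S (Finset.Ico k K) * multilinearSpan S (Finset.Ico k K) := by
    simpa only [hG] using mul_apply_mem_multilinearSpan_mul (X := fun ω => (H ω)ᵀ)
      (fun i j => hHspan j i) hHspan
  have hA2span : ∀ U, k - 1 ∈ U → ∀ i j,
      (fun ω => (S (k - 1) ω * S (k - 1) ω) i j) ∈ multilinearSpan S U * multilinearSpan S U :=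
    fun U hk1U => mul_apply_mem_multilinearSpan_mul (entry_mem_multilinearSpan hk1U)
      (entry_mem_multilinearSpan hk1U)
  have hGindep : ∀ i p {Y : Ω → ℝ}, Y ∈ multilinearSpan S {k - 1} * multilinearSpan S {k - 1} →
      IndepFun (fun ω => G ω i p) Y μ := fun i p _ =>
    indepFun_of_mem_multilinearSpan_mul_of_disjoint hIndep hmeas hnmeas (by simp; omega) hIco
      (by simpa using hk1) (hGspan i p)
  have hnn : ∀ a b, Integrable (fun ω => n ω a * n ω b) μ := fun a b => by
    simpa using hIntSn a b (fun _ => a) (fun _ => a) (fun _ => a) (fun _ => a) 0 0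
  rw [show y = fun ω => (H ω * (S (k - 1) ω - D)) *ᵥ n ω from funext hy,
    trace_mExp_vecMulVec_filtered_noise (fun ω => hsymm _ hk1 ω) hD.isSymm (fun _ => rfl) hG
      (fun i a j b => indepFun_comp_noise_of_mem_multilinearSpan_mul hIndep hmeas hnmeas
        (hMspan i a j b) (f := fun v => v a * v b) (by fun_prop))
      (fun i a j b => integrable_of_mem_multilinearSpan_mul hIntS (hMspan i a j b)) hnn hn_cov
      (fun i p q j => hGindep i p
        (multilinearSpan_le_mul (entry_mem_multilinearSpan (Finset.mem_singleton_self _) q j)))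
      (fun i p q j => hGindep i p (hA2span _ (Finset.mem_singleton_self _) q j))
      (fun i j => integrable_of_mem_multilinearSpan_mul hIntS
        (multilinearSpan_mul_mono hIco (hGspan i j)))
      (hS_int _ hk1) (fun i j => integrable_of_mem_multilinearSpan_mul hIntS (hA2span _ hk1 i j)),
    hSbar _ hk1]
  ring

/-- Proposition 3, stochastic FIR.
For i.i.d. random symmetric matrices `S_{k−1},…,S_{K−1}` with mean `S̄`, a random vector `n`
independent of them with `E[n] = 0`, `E[n nᵀ] = σ² I`, `H = Σ_{κ=k}^{K} φ_κ Φ_{k:κ−1}`,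
`G = Hᵀ H` and `ỹ = H (S_{k−1} − D) n`, assuming the stated expectations exist,
`(1/N)·tr(E[ỹ ỹᵀ]) = (σ²/N)·( tr(E[G S_{k−1}²]) + tr(E[G] D²) − 2 tr(E[G] S̄ D) )`. -/
theorem stmt7 {Ω : Type} [MeasurableSpace Ω] (μ : Measure Ω) [IsProbabilityMeasure μ]
    {N : ℕ} (hN : 0 < N) (k K : ℕ) (hk : 1 ≤ k) (hkK : k ≤ K)
    (S : ℕ → Ω → Matrix (Fin N) (Fin N) ℝ) (n : Ω → Fin N → ℝ)
    (hmeas : ∀ τ ∈ Finset.Icc (k - 1) (K - 1), Measurable (S τ))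
    (hnmeas : Measurable n)
    (hsymm : ∀ τ ∈ Finset.Icc (k - 1) (K - 1), ∀ ω, (S τ ω).IsSymm)
    (hS_int : ∀ τ ∈ Finset.Icc (k - 1) (K - 1), ∀ i j, Integrable (fun ω => S τ ω i j) μ)
    -- all the expectations appearing below exist:
    (hIntS : ∀ (a b c d : ℕ → Fin N) (e f : ℕ → ℕ),
      Integrable (fun ω => ∏ τ ∈ Finset.Icc (k - 1) (K - 1),
        (S τ ω (a τ) (b τ)) ^ (e τ) * (S τ ω (c τ) (d τ)) ^ (f τ)) μ)
    (hIntSn : ∀ (i j : Fin N) (a b c d : ℕ → Fin N) (e f : ℕ → ℕ),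
      Integrable (fun ω => (∏ τ ∈ Finset.Icc (k - 1) (K - 1),
        (S τ ω (a τ) (b τ)) ^ (e τ) * (S τ ω (c τ) (d τ)) ^ (f τ)) * (n ω i * n ω j)) μ)
    -- the matrices are i.i.d. and `n` is independent of them:
    (hIndep : iIndepFun (m := fun i : Option {τ : ℕ // τ ∈ Finset.Icc (k - 1) (K - 1)} => famMS N i)
      (fam (fun τ : {τ : ℕ // τ ∈ Finset.Icc (k - 1) (K - 1)} => S τ.1) n) μ)
    (hid : ∀ τ ∈ Finset.Icc (k - 1) (K - 1), ∀ τ' ∈ Finset.Icc (k - 1) (K - 1),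
      IdentDistrib (S τ) (S τ') μ μ)
    (Sbar : Matrix (Fin N) (Fin N) ℝ)
    (hSbar : ∀ τ ∈ Finset.Icc (k - 1) (K - 1), mExp μ (S τ) = Sbar)
    (σ : ℝ) (hσ : 0 ≤ σ)
    (hn_mean : ∀ i, ∫ ω, n ω i ∂μ = 0)
    (hn_cov : ∀ i j, ∫ ω, n ω i * n ω j ∂μ = σ ^ 2 * (1 : Matrix (Fin N) (Fin N) ℝ) i j)
    (φ : ℕ → ℝ) (D : Matrix (Fin N) (Fin N) ℝ) (hD : D.IsDiag)
    (H : Ω → Matrix (Fin N) (Fin N) ℝ)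
    (hH : ∀ ω, H ω = ∑ κ ∈ Finset.Icc k K, φ κ • phiProd S k κ ω)
    (G : Ω → Matrix (Fin N) (Fin N) ℝ) (hG : ∀ ω, G ω = (H ω)ᵀ * H ω)
    (y : Ω → Fin N → ℝ)
    (hy : ∀ ω, y ω = (H ω * (S (k - 1) ω - D)).mulVec (n ω)) :
    (1 / N : ℝ) * (mExp μ (fun ω => vecMulVec (y ω) (y ω))).trace
      = (σ ^ 2 / N) *
        ((mExp μ (fun ω => G ω * (S (k - 1) ω) ^ 2)).trace
          + (mExp μ G * D ^ 2).trace - 2 * (mExp μ G * Sbar * D).trace) :=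
  stmt7_general μ hN k K hk hkK S n hmeas hnmeas hsymm hS_int hIntS hIntSn hIndep Sbar hSbar σ
    hn_cov φ D hD H hH G hG y hy
end
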